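/- arXiv:2008.10257 — 5 statements merged into one kernel-verified Lean document; each statement's English description precedes it below -/
import Mathlib

section
/- Let v* be the optimal solution of the quadratic program minimizing (1/2) vᵀ Σ v − bᵀ v over {v : Qv ≥ 0}, where Σ is a symmetric positive definite m×m matrix, b ∈ ℝ^m, and Q is an n×m matrix. If there exists v₀ with Qv₀ ≥ 0 and bᵀv₀ > 0, then v* ≠ 0 and bᵀ v* = (v*)ᵀ Σ v* > 0. -/
open Matrix

/-!
Since the feasible set is a cone, `t ↦ f(t • v*)`, with `f v = ½ vᵀ S v − bᵀ v`, is a quadratic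
in `t` minimized over `t ≥ 0` at the interior point `t = 1`; its derivative `v*ᵀ S v* − bᵀ v*`
there vanishes, so `f v* = −½ bᵀ v*`. Since `s • v₀` is feasible and `f (s • v₀) < 0` for small
`s > 0`, the minimum value is negative, so `bᵀ v* > 0` and `v* ≠ 0`.
-/

section Quadratic

variable {a c : ℝ}

theorem eq_of_isMinOn_Ici_quadratic
    (h : IsMinOn (fun t : ℝ => t ^ 2 / 2 * a - t * c) (Set.Ici 0) 1) : c = a := by
  have hderiv : HasDerivAt (fun t : ℝ => t ^ 2 / 2 * a - t * c) (a - c) 1 := by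
    have := (((hasDerivAt_pow 2 (1 : ℝ)).div_const 2).mul_const a).sub
      ((hasDerivAt_id' (1 : ℝ)).mul_const c)
    norm_num at this
    exact this
  have hmin := (h.isLocalMin (Ici_mem_nhds zero_lt_one)).hasDerivAt_eq_zero hderiv
  linarith

theorem exists_pos_quadratic_neg (hc : 0 < c) : ∃ t > 0, t ^ 2 / 2 * a - t * c < 0 := by
  have hden : 0 < |a| + 1 := by positivity
  refine ⟨c / (|a| + 1), div_pos hc hden, ?_⟩
  have hta : c / (|a| + 1) * a < c := by
    calc c / (|a| + 1) * a ≤ c / (|a| + 1) * |a| := by gcongr; exact le_abs_self a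
      _ < c / (|a| + 1) * (|a| + 1) := by gcongr; linarith
      _ = c := div_mul_cancel₀ c hden.ne'
  nlinarith [div_pos hc hden]

end Quadratic

section Objective

variable {ι : Type*} [Fintype ι] (S : Matrix ι ι ℝ) (b : ι → ℝ)

noncomputable def quadObjective (v : ι → ℝ) : ℝ := (1 / 2) * (v ⬝ᵥ S *ᵥ v) - b ⬝ᵥ v

theorem quadObjective_smul (t : ℝ) (v : ι → ℝ) :
    quadObjective S b (t • v) = t ^ 2 / 2 * (v ⬝ᵥ S *ᵥ v) - t * (b ⬝ᵥ v) := by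
  simp only [quadObjective, mulVec_smul, smul_dotProduct, dotProduct_smul, smul_eq_mul]
  ring

theorem dotProduct_eq_of_quadObjective_le_smul {v : ι → ℝ}
    (h : ∀ t : ℝ, 0 ≤ t → quadObjective S b v ≤ quadObjective S b (t • v)) :
    b ⬝ᵥ v = v ⬝ᵥ S *ᵥ v := by
  refine eq_of_isMinOn_Ici_quadratic fun t ht => ?_
  have := h t ht
  rw [quadObjective_smul, ← one_smul ℝ v, quadObjective_smul, one_smul] at this
  exact this

end Objective

theorem stmt_2_general {m n : ℕ} (S : Matrix (Fin m) (Fin m) ℝ)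
    (b : Fin m → ℝ) (Q : Matrix (Fin n) (Fin m) ℝ)
    (v₀ : Fin m → ℝ) (hv₀feas : ∀ i, 0 ≤ Q.mulVec v₀ i) (hbv₀ : 0 < b ⬝ᵥ v₀)
    (vstar : Fin m → ℝ) (hfeas : ∀ i, 0 ≤ Q.mulVec vstar i)
    (hmin : ∀ v : Fin m → ℝ, (∀ i, 0 ≤ Q.mulVec v i) →
      (1 / 2) * (vstar ⬝ᵥ S.mulVec vstar) - b ⬝ᵥ vstar ≤
        (1 / 2) * (v ⬝ᵥ S.mulVec v) - b ⬝ᵥ v) :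
    vstar ≠ 0 ∧ b ⬝ᵥ vstar = vstar ⬝ᵥ S.mulVec vstar ∧ 0 < b ⬝ᵥ vstar := by
  have hcone : ∀ v : Fin m → ℝ, (∀ i, 0 ≤ (Q *ᵥ v) i) →
      ∀ t : ℝ, 0 ≤ t → ∀ i, 0 ≤ (Q *ᵥ (t • v)) i :=
    fun v hv t ht i => by rw [mulVec_smul]; exact mul_nonneg ht (hv i)
  have hβ : b ⬝ᵥ vstar = vstar ⬝ᵥ S *ᵥ vstar :=
    dotProduct_eq_of_quadObjective_le_smul S b fun t ht => hmin _ (hcone _ hfeas t ht)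
  obtain ⟨s, hs, hneg⟩ := exists_pos_quadratic_neg (a := v₀ ⬝ᵥ S *ᵥ v₀) hbv₀
  have hval : quadObjective S b vstar < 0 :=
    (hmin _ (hcone _ hv₀feas s hs.le)).trans_lt (by rwa [← quadObjective_smul] at hneg)
  have hpos : 0 < b ⬝ᵥ vstar := by
    rw [quadObjective, ← hβ] at hval
    linarith
  refine ⟨?_, hβ, hpos⟩
  rintro rfl
  simp at hpos

/-- If `v*` minimizes `(1/2) vᵀ Σ v − bᵀ v` over the cone `{v : Qv ≥ 0}`, where `Σ` is
symmetric positive definite, and there is a feasible `v₀` with `bᵀv₀ > 0`, then `v* ≠ 0`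
and `bᵀ v* = (v*)ᵀ Σ v* > 0`. -/
theorem stmt_2 {m n : ℕ} (S : Matrix (Fin m) (Fin m) ℝ) (hSsymm : S.IsSymm)
    (hSpd : S.PosDef) (b : Fin m → ℝ) (Q : Matrix (Fin n) (Fin m) ℝ)
    (v₀ : Fin m → ℝ) (hv₀feas : ∀ i, 0 ≤ Q.mulVec v₀ i) (hbv₀ : 0 < b ⬝ᵥ v₀)
    (vstar : Fin m → ℝ) (hfeas : ∀ i, 0 ≤ Q.mulVec vstar i)
    (hmin : ∀ v : Fin m → ℝ, (∀ i, 0 ≤ Q.mulVec v i) →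
      (1 / 2) * (vstar ⬝ᵥ S.mulVec vstar) - b ⬝ᵥ vstar ≤
        (1 / 2) * (v ⬝ᵥ S.mulVec v) - b ⬝ᵥ v) :
    vstar ≠ 0 ∧ b ⬝ᵥ vstar = vstar ⬝ᵥ S.mulVec vstar ∧ 0 < b ⬝ᵥ vstar :=
  stmt_2_general S b Q v₀ hv₀feas hbv₀ vstar hfeas hmin
end

section
/- Let σv : [t,t*] → ℝ^d be bounded measurable with c := inf_{s} ‖σv(s)‖ > 0, and let a₁ : [t,t*] → ℝ be continuous. Suppose that for every t' ∈ (t,t*), ∫_{t'}^{t*} a₁(s)² ‖σv(s)‖² ds > 0 and (1/2)∫_{t'}^{t*} a₁(s)(1−a₁(s))‖σv(s)‖² ds + λ·√(∫_{t'}^{t*} a₁(s)²‖σv(s)‖² ds) = 0 for a fixed constant λ ≠ 0. Then, using Cauchy–Schwarz, |√(∫_{t'}^{t*} a₁(s)²‖σv(s)‖² ds) − 2λ| ≤ √(∫_{t'}^{t*} ‖σv(s)‖² ds) for all t' ∈ (t,t*), and letting t' ↑ t* yields a contradiction; hence no such a₁ exists. -/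
/-!
Write `I`, `K`, `S` for the integrals of `a₁²‖σv‖²`, `a₁‖σv‖²`, `‖σv‖²` over `[t', t*]`.
Since `∫ a₁(1 - a₁)‖σv‖² = K - I`, the identity `heq` says `K = √I (√I - 2λ)`, and
Cauchy–Schwarz `K² ≤ S I` with `I > 0` gives `|√I - 2λ| ≤ √S`. As `t' ↑ t*` both `I` and `S`
tend to `0`, so `2|λ| ≤ √I + √S` forces `λ = 0`.
-/

open MeasureTheory intervalIntegral Set Filter Topology

theorem sq_integral_mul_le_integral_mul_integral_sq_mul {α : Type*} [MeasurableSpace α]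
    {μ : Measure α} {f w : α → ℝ} (hw : 0 ≤ᵐ[μ] w) (hw_int : Integrable w μ)
    (hfw : Integrable (fun x => f x * w x) μ) (hf2w : Integrable (fun x => f x ^ 2 * w x) μ) :
    (∫ x, f x * w x ∂μ) ^ 2 ≤ (∫ x, w x ∂μ) * ∫ x, f x ^ 2 * w x ∂μ := by
  have hquad : ∀ r : ℝ, 0 ≤ (∫ x, w x ∂μ) * (r * r) + 2 * (∫ x, f x * w x ∂μ) * r +
      ∫ x, f x ^ 2 * w x ∂μ := by
    intro r
    have hexpand : ∫ x, (f x + r) ^ 2 * w x ∂μ =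
        ∫ x, (r * r) * w x + (2 * r) * (f x * w x) + f x ^ 2 * w x ∂μ := by
      congr 1; funext x; ring
    rw [integral_add (by exact (hw_int.const_mul _).add (hfw.const_mul _)) hf2w,
      integral_add (hw_int.const_mul _) (hfw.const_mul _), MeasureTheory.integral_const_mul,
      MeasureTheory.integral_const_mul] at hexpand
    linarith [integral_nonneg_of_ae (hw.mono fun x hx => mul_nonneg (sq_nonneg (f x + r)) hx)]
  have := discrim_le_zero hquad
  rw [discrim] at this
  linarith

theorem sq_intervalIntegral_mul_le_integral_mul_integral_sq_mul {a b : ℝ} (hab : a ≤ b)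
    {f w : ℝ → ℝ} (hw : ∀ x, 0 ≤ w x) (hw_int : IntervalIntegrable w volume a b)
    (hfw : IntervalIntegrable (fun x => f x * w x) volume a b)
    (hf2w : IntervalIntegrable (fun x => f x ^ 2 * w x) volume a b) :
    (∫ x in a..b, f x * w x) ^ 2 ≤ (∫ x in a..b, w x) * ∫ x in a..b, f x ^ 2 * w x := by
  simp only [integral_of_le hab]
  exact sq_integral_mul_le_integral_mul_integral_sq_mul (ae_of_all _ hw) hw_int.1 hfw.1 hf2w.1

theorem abs_sqrt_sub_two_mul_le_sqrt {I K S lam : ℝ} (hI : 0 < I) (hCS : K ^ 2 ≤ S * I)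
    (heq : 1 / 2 * (K - I) + lam * √I = 0) : |√I - 2 * lam| ≤ √S := by
  have hK : K = √I * (√I - 2 * lam) := by
    nlinarith [Real.mul_self_sqrt hI.le]
  apply Real.abs_le_sqrt
  have : I * (√I - 2 * lam) ^ 2 ≤ I * S := by
    rw [hK, mul_pow, Real.sq_sqrt hI.le] at hCS; linarith
  exact le_of_mul_le_mul_left this hI

theorem tendsto_intervalIntegral_left_nhdsLT {μ : Measure ℝ} [NullSingletonClass μ]
    {f : ℝ → ℝ} {a b : ℝ} (hab : a < b) (hf : IntegrableOn f (Icc a b) μ) :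
    Tendsto (fun x => ∫ s in x..b, f s ∂μ) (𝓝[<] b) (𝓝 0) := by
  rw [← uIcc_of_le hab.le] at hf
  have hcont : Tendsto (fun x => ∫ s in x..b, f s ∂μ) (𝓝[uIcc a b] b)
      (𝓝 (∫ s in b..b, f s ∂μ)) := continuousOn_primitive_interval_left hf b right_mem_uIcc
  rw [integral_same, uIcc_of_le hab.le] at hcont
  rw [← nhdsWithin_Ioo_eq_nhdsLT hab]
  exact hcont.mono_left (nhdsWithin_mono _ Ioo_subset_Icc_self)

theorem stmt_10_general {d : ℕ} (t tstar : ℝ) (ht : t < tstar)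
    (σv : ℝ → EuclideanSpace ℝ (Fin d)) (hσvmeas : Measurable σv)
    (C : ℝ) (hσvbd : ∀ s ∈ Set.Icc t tstar, ‖σv s‖ ≤ C)
    (a₁ : ℝ → ℝ) (ha₁ : ContinuousOn a₁ (Set.Icc t tstar))
    (lam : ℝ) (hlam : lam ≠ 0)
    (hpos : ∀ t' ∈ Set.Ioo t tstar,
      0 < ∫ s in t'..tstar, (a₁ s) ^ 2 * ‖σv s‖ ^ 2)
    (heq : ∀ t' ∈ Set.Ioo t tstar,
      (1 / 2) * (∫ s in t'..tstar, a₁ s * (1 - a₁ s) * ‖σv s‖ ^ 2) +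
        lam * Real.sqrt (∫ s in t'..tstar, (a₁ s) ^ 2 * ‖σv s‖ ^ 2) = 0) :
    (∀ t' ∈ Set.Ioo t tstar,
      |Real.sqrt (∫ s in t'..tstar, (a₁ s) ^ 2 * ‖σv s‖ ^ 2) - 2 * lam| ≤
        Real.sqrt (∫ s in t'..tstar, ‖σv s‖ ^ 2)) ∧ False := by
  have hw : IntegrableOn (fun s => ‖σv s‖ ^ 2) (Icc t tstar) :=
    .of_bound measure_Icc_lt_top (hσvmeas.norm.pow_const 2).aestronglyMeasurable.restrict
      (C ^ 2)
      ((ae_restrict_iff' measurableSet_Icc).2 (ae_of_all _ fun s hs => by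
        simpa using pow_le_pow_left₀ (norm_nonneg _) (hσvbd s hs) 2))
  have hw_on : ∀ t' ∈ Ioo t tstar, IntegrableOn (fun s => ‖σv s‖ ^ 2) (Icc t' tstar) :=
    fun t' ht' => hw.mono_set (Icc_subset_Icc_left ht'.1.le)
  have hmul : ∀ t' ∈ Ioo t tstar, ∀ φ : ℝ → ℝ, ContinuousOn φ (Icc t tstar) →
      IntervalIntegrable (fun s => φ s * ‖σv s‖ ^ 2) volume t' tstar := fun t' ht' φ hφ =>
    (intervalIntegrable_iff_integrableOn_Icc_of_le ht'.2.le).2 <|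
      (hw_on t' ht').continuousOn_mul (hφ.mono (Icc_subset_Icc_left ht'.1.le)) isCompact_Icc
  have hbound : ∀ t' ∈ Ioo t tstar,
      |√(∫ s in t'..tstar, (a₁ s) ^ 2 * ‖σv s‖ ^ 2) - 2 * lam| ≤
        √(∫ s in t'..tstar, ‖σv s‖ ^ 2) := by
    intro t' ht'
    have hK := hmul t' ht' a₁ ha₁
    have hI := hmul t' ht' (a₁ · ^ 2) (ha₁.pow 2)
    have hsplit : ∫ s in t'..tstar, a₁ s * (1 - a₁ s) * ‖σv s‖ ^ 2 =
        (∫ s in t'..tstar, a₁ s * ‖σv s‖ ^ 2) -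
          ∫ s in t'..tstar, (a₁ s) ^ 2 * ‖σv s‖ ^ 2 := by
      rw [← integral_sub hK hI]; congr 1; funext s; ring
    refine abs_sqrt_sub_two_mul_le_sqrt (hpos t' ht') ?_ (hsplit ▸ heq t' ht')
    exact sq_intervalIntegral_mul_le_integral_mul_integral_sq_mul ht'.2.le (fun _ => sq_nonneg _)
      ((intervalIntegrable_iff_integrableOn_Icc_of_le ht'.2.le).2 (hw_on t' ht')) hK hI
  refine ⟨hbound, ?_⟩
  have hlim : Tendsto (fun t' => √(∫ s in t'..tstar, (a₁ s) ^ 2 * ‖σv s‖ ^ 2) +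
      √(∫ s in t'..tstar, ‖σv s‖ ^ 2)) (𝓝[<] tstar) (𝓝 0) := by
    simpa using (tendsto_intervalIntegral_left_nhdsLT ht
      (hw.continuousOn_mul (ha₁.pow 2) isCompact_Icc)).sqrt.add
      (tendsto_intervalIntegral_left_nhdsLT ht hw).sqrt
  obtain ⟨t', hsmall, ht'⟩ :=
    ((hlim.eventually (gt_mem_nhds (by positivity : 0 < 2 * |lam|))).and
      (Ioo_mem_nhdsLT ht)).exists
  have hreverse :=
    abs_sub_abs_le_abs_sub (2 * lam) √(∫ s in t'..tstar, (a₁ s) ^ 2 * ‖σv s‖ ^ 2)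
  rw [abs_sub_comm, abs_mul, abs_two, abs_of_nonneg (Real.sqrt_nonneg _)] at hreverse
  linarith [hbound t' ht']

/-- Nonexistence of an affine equilibrium coefficient for `α ≠ 1/2`: under the stated
integral identities with `λ ≠ 0`, the Cauchy–Schwarz inequality
`|√(∫ a₁²‖σv‖²) − 2λ| ≤ √(∫ ‖σv‖²)` holds on every subinterval, and letting
`t' ↑ t*` yields a contradiction, so no such `a₁` exists. -/
theorem stmt_10 {d : ℕ} (t tstar : ℝ) (ht : t < tstar)
    (σv : ℝ → EuclideanSpace ℝ (Fin d)) (hσvmeas : Measurable σv)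
    (C : ℝ) (hσvbd : ∀ s ∈ Set.Icc t tstar, ‖σv s‖ ≤ C)
    (c : ℝ) (hc : 0 < c) (hσvlow : ∀ s ∈ Set.Icc t tstar, c ≤ ‖σv s‖)
    (a₁ : ℝ → ℝ) (ha₁ : ContinuousOn a₁ (Set.Icc t tstar))
    (lam : ℝ) (hlam : lam ≠ 0)
    (hpos : ∀ t' ∈ Set.Ioo t tstar,
      0 < ∫ s in t'..tstar, (a₁ s) ^ 2 * ‖σv s‖ ^ 2)
    (heq : ∀ t' ∈ Set.Ioo t tstar,
      (1 / 2) * (∫ s in t'..tstar, a₁ s * (1 - a₁ s) * ‖σv s‖ ^ 2) +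
        lam * Real.sqrt (∫ s in t'..tstar, (a₁ s) ^ 2 * ‖σv s‖ ^ 2) = 0) :
    (∀ t' ∈ Set.Ioo t tstar,
      |Real.sqrt (∫ s in t'..tstar, (a₁ s) ^ 2 * ‖σv s‖ ^ 2) - 2 * lam| ≤
        Real.sqrt (∫ s in t'..tstar, ‖σv s‖ ^ 2)) ∧ False :=
  stmt_10_general t tstar ht σv hσvmeas C hσvbd a₁ ha₁ lam hlam hpos heq
end

section
/- We have e^y − 1 ≥ y for all y ∈ ℝ, with strict inequality for y ≠ 0. Consequently, if M is a random variable and μ a positive measure such that the event A := {∫ (e^{M(s)} − 1) dμ(s) > 0, ∫ M(s) dμ(s) ≤ 0} has positive probability, and ∫ M(s)dμ(s) is a centered nondegenerate Gaussian random variable, then P(∫ (e^{M(s)} − 1) dμ(s) ≤ 0) < 1/2. -/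
open MeasureTheory ProbabilityTheory

lemma gauss_half_aux {v : NNReal} (hv : v ≠ 0) :
    gaussianReal 0 v (Set.Iic 0) = 1 / 2 := by
  have hmap : (gaussianReal 0 v).map (fun x => (-1 : ℝ) * x) = gaussianReal 0 v := by
    rw [gaussianReal_map_const_mul]
    norm_num
  have hsymm : gaussianReal 0 v (Set.Iic 0) = gaussianReal 0 v (Set.Ici 0) := by
    conv_lhs => rw [← hmap]
    rw [Measure.map_apply (by fun_prop) measurableSet_Iic]
    congr 1
    ext x
    simp
  have hzero : gaussianReal 0 v {(0:ℝ)} = 0 := by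
    refine gaussianReal_absolutelyContinuous 0 hv ?_
    simp
  have hIci : gaussianReal 0 v (Set.Ici 0) = gaussianReal 0 v (Set.Ioi 0) := by
    rw [← Set.Ioi_union_left]
    refine le_antisymm ((measure_union_le _ _).trans (by simp [hzero]))
      (measure_mono Set.subset_union_left)
  have hsum : gaussianReal 0 v (Set.Iic 0) + gaussianReal 0 v (Set.Ioi 0) = 1 := by
    rw [← measure_union (Set.Iic_disjoint_Ioi le_rfl) measurableSet_Ioi, Set.Iic_union_Ioi,
      measure_univ]
  rw [hsymm, hIci, ← two_mul] at hsum
  rw [hsymm, hIci]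
  exact (ENNReal.eq_div_iff (by norm_num) (by norm_num)).mpr hsum

/-- `e^y − 1 ≥ y` for all `y`, strictly for `y ≠ 0`. Consequently, if
`U = ∫(e^{M(s)}−1)dμ(s)` dominates `V = ∫M(s)dμ(s)` pointwise, the event
`{U > 0, V ≤ 0}` has positive probability, and `V` is a centered nondegenerate Gaussian,
then `P(U ≤ 0) < 1/2`. -/
theorem stmt_14 {Ω : Type*} [MeasurableSpace Ω] (P : Measure Ω) [IsProbabilityMeasure P]
    (U V : Ω → ℝ) (hUmeas : Measurable U) (hVmeas : Measurable V)
    (hUV : ∀ ω, V ω ≤ U ω)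
    (hA : 0 < P {ω | 0 < U ω ∧ V ω ≤ 0})
    (vvar : NNReal) (hvar : vvar ≠ 0)
    (hGauss : P.map V = gaussianReal 0 vvar) :
    (∀ y : ℝ, y ≤ Real.exp y - 1 ∧ (y ≠ 0 → y < Real.exp y - 1)) ∧
    P {ω | U ω ≤ 0} < 1 / 2 := by
  constructor
  · intro y
    constructor
    · linarith [Real.add_one_le_exp y]
    · intro hy
      linarith [Real.add_one_lt_exp hy]
  · have hVhalf : P {ω | V ω ≤ 0} = 1 / 2 := by
      have : P {ω | V ω ≤ 0} = P.map V (Set.Iic 0) := by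
        rw [Measure.map_apply hVmeas measurableSet_Iic]
        rfl
      rw [this, hGauss, gauss_half_aux hvar]
    have hUset : MeasurableSet {ω | U ω ≤ 0} := hUmeas measurableSet_Iic
    have hAset : MeasurableSet {ω | 0 < U ω ∧ V ω ≤ 0} :=
      (hUmeas measurableSet_Ioi).inter (hVmeas measurableSet_Iic)
    have hdisj : Disjoint {ω | U ω ≤ 0} {ω | 0 < U ω ∧ V ω ≤ 0} := by
      rw [Set.disjoint_left]
      intro ω h1 h2
      exact absurd h2.1 (not_lt.mpr h1)
    have hsub : {ω | U ω ≤ 0} ∪ {ω | 0 < U ω ∧ V ω ≤ 0} ⊆ {ω | V ω ≤ 0} := by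
      rintro ω (h | h)
      · exact le_trans (hUV ω) h
      · exact h.2
    have hle : P {ω | U ω ≤ 0} + P {ω | 0 < U ω ∧ V ω ≤ 0} ≤ 1 / 2 := by
      rw [← measure_union hdisj hAset, ← hVhalf]
      exact measure_mono hsub
    calc P {ω | U ω ≤ 0}
        < P {ω | U ω ≤ 0} + P {ω | 0 < U ω ∧ V ω ≤ 0} :=
          ENNReal.lt_add_right (measure_ne_top _ _) hA.ne'
      _ ≤ 1 / 2 := hle
end

section
/- Let μ be a positive atomless finite measure on [t,T] with μ((t,T)) > 0. Then there exists ζ₁ ∈ ℝ with ∫_t^T (T−s)(ζ₁−s) dμ(s) = 0, and for m(s) := (T−s)(ζ₂−s) with a suitable ζ₂ < ζ₁ one has simultaneously ∫_t^T (e^{m(s)} − 1) dμ(s) > 0 and ∫_t^T m(s) dμ(s) < 0. -/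
/-!
Since `ζ ↦ ∫ (T - s)(ζ - s) dμ` is affine with slope `∫ (T - s) dμ > 0`, it has a unique zero
`ζ₁`. As `eʸ - 1 > y` for `y ≠ 0` and `(T - s)(ζ₁ - s)` vanishes only at two (null) points, the
exponential integral at `ζ₁` strictly exceeds the linear one, which is `0`. The exponential
integral is continuous in `ζ`, so it stays positive slightly to the left of `ζ₁`, where the
linear integral is already negative.
-/

open MeasureTheory Set Filter Topology Real

theorem Set.Countable.measure_compl_pos {α : Type*} [MeasurableSpace α] {μ : Measure α}
    [NullSingletonClass μ] (hμ : μ ≠ 0) {s : Set α} (hs : s.Countable) : 0 < μ sᶜ := by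
  refine pos_iff_ne_zero.2 fun h => hμ (Measure.measure_univ_eq_zero.1 ?_)
  rw [← union_compl_self s]
  exact measure_union_null (hs.measure_zero μ) h

theorem integral_lt_integral_exp_sub_one {α : Type*} [MeasurableSpace α] {μ : Measure α}
    {g : α → ℝ} (hg : Integrable g μ) (hexp : Integrable (fun x => exp (g x) - 1) μ)
    (hsupp : 0 < μ (Function.support g)) :
    ∫ x, g x ∂μ < ∫ x, (exp (g x) - 1) ∂μ := by
  have hsupport : Function.support (fun x => exp (g x) - 1 - g x) = Function.support g := by
    ext x
    simp only [Function.mem_support, ne_eq]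
    constructor
    · intro h hg0
      simp [hg0] at h
    · intro h
      linarith [add_one_lt_exp h]
  have hgap : 0 < ∫ x, (exp (g x) - 1 - g x) ∂μ := by
    have hint : Integrable (fun x => exp (g x) - 1 - g x) μ := hexp.sub hg
    rw [integral_pos_iff_support_of_nonneg_ae _ hint, hsupport]
    · exact hsupp
    · exact ae_of_all _ fun x => show 0 ≤ exp (g x) - 1 - g x by linarith [add_one_le_exp (g x)]
  rw [integral_sub hexp hg] at hgap
  linarith

section ConcentratedOnIcc

variable {t T : ℝ} {μ : Measure ℝ}

theorem Continuous.integrable_of_ae_mem_Icc [IsLocallyFiniteMeasure μ] {f : ℝ → ℝ}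
    (hf : Continuous f) (hμ : ∀ᵐ s ∂μ, s ∈ Icc t T) : Integrable f μ :=
  Measure.restrict_eq_self_of_ae_mem hμ ▸ hf.integrableOn_Icc

theorem continuous_integral_of_ae_mem_Icc [IsLocallyFiniteMeasure μ] {f : ℝ → ℝ → ℝ}
    (hf : Continuous f.uncurry) (hμ : ∀ᵐ s ∂μ, s ∈ Icc t T) :
    Continuous fun x => ∫ s, f x s ∂μ := by
  simpa only [Measure.restrict_eq_self_of_ae_mem hμ] using
    continuous_parametric_integral_of_continuous (μ := μ) hf (isCompact_Icc (a := t) (b := T))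

theorem integral_sub_mul_sub [IsLocallyFiniteMeasure μ] (hμ : ∀ᵐ s ∂μ, s ∈ Icc t T)
    (ζ : ℝ) :
    ∫ s, (T - s) * (ζ - s) ∂μ = ζ * ∫ s, (T - s) ∂μ - ∫ s, (T - s) * s ∂μ := by
  have hsplit : (fun s => (T - s) * (ζ - s)) = fun s => ζ * (T - s) - (T - s) * s := by
    funext s; ring
  rw [hsplit, integral_sub, integral_const_mul]
  · exact (Continuous.integrable_of_ae_mem_Icc (by fun_prop) hμ).const_mul ζ
  · exact Continuous.integrable_of_ae_mem_Icc (by fun_prop) hμ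

theorem support_sub_mul_sub (T ζ : ℝ) :
    Function.support (fun s : ℝ => (T - s) * (ζ - s)) = {T, ζ}ᶜ := by
  ext s
  simp [sub_eq_zero, eq_comm, not_or]

theorem integral_const_sub_pos [IsLocallyFiniteMeasure μ] [NullSingletonClass μ] (hμ0 : μ ≠ 0)
    (hμ : ∀ᵐ s ∂μ, s ∈ Icc t T) : 0 < ∫ s, (T - s) ∂μ := by
  rw [integral_pos_iff_support_of_nonneg_ae (hμ.mono fun s hs => sub_nonneg.2 hs.2)
    (Continuous.integrable_of_ae_mem_Icc (by fun_prop) hμ)]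
  have hsupport : Function.support (fun s : ℝ => T - s) = {T}ᶜ := by
    ext s; simp [sub_eq_zero, eq_comm]
  rw [hsupport]
  exact (countable_singleton T).measure_compl_pos hμ0

theorem integral_exp_sub_mul_sub_sub_one_pos [IsFiniteMeasure μ] [NullSingletonClass μ]
    (hμ0 : μ ≠ 0) (hμ : ∀ᵐ s ∂μ, s ∈ Icc t T) {ζ : ℝ} (hζ : ∫ s, (T - s) * (ζ - s) ∂μ = 0) :
    0 < ∫ s, (exp ((T - s) * (ζ - s)) - 1) ∂μ := by
  rw [← hζ]
  refine integral_lt_integral_exp_sub_one (Continuous.integrable_of_ae_mem_Icc (by fun_prop) hμ)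
    (Continuous.integrable_of_ae_mem_Icc (by fun_prop) hμ) ?_
  rw [support_sub_mul_sub]
  exact (toFinite _).countable.measure_compl_pos hμ0

end ConcentratedOnIcc

theorem stmt_15_general (t T : ℝ) (μ : Measure ℝ) [IsFiniteMeasure μ] [NullSingletonClass μ]
    (hsupp : μ (Set.Icc t T)ᶜ = 0) (hpos : 0 < μ (Set.Ioo t T)) :
    ∃ ζ₁ : ℝ, (∫ s, (T - s) * (ζ₁ - s) ∂μ) = 0 ∧
      ∃ ζ₂ : ℝ, ζ₂ < ζ₁ ∧
        (0 < ∫ s, (Real.exp ((T - s) * (ζ₂ - s)) - 1) ∂μ) ∧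
        (∫ s, (T - s) * (ζ₂ - s) ∂μ) < 0 := by
  have hμ : ∀ᵐ s ∂μ, s ∈ Icc t T := mem_ae_iff.2 hsupp
  have hμ0 : μ ≠ 0 := by
    rintro rfl
    simp at hpos
  have ha := integral_const_sub_pos (T := T) hμ0 hμ
  set ζ₁ := (∫ s, (T - s) * s ∂μ) / ∫ s, (T - s) ∂μ
  have hζ₁ : ∫ s, (T - s) * (ζ₁ - s) ∂μ = 0 := by
    rw [integral_sub_mul_sub hμ, div_mul_cancel₀ _ ha.ne', sub_self]
  refine ⟨ζ₁, hζ₁, ?_⟩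
  have hexp_near : ∀ᶠ ζ in 𝓝 ζ₁, 0 < ∫ s, (exp ((T - s) * (ζ - s)) - 1) ∂μ :=
    (continuous_integral_of_ae_mem_Icc (by fun_prop) hμ).continuousAt.eventually
      (lt_mem_nhds (integral_exp_sub_mul_sub_sub_one_pos hμ0 hμ hζ₁))
  obtain ⟨ζ₂, hζ₂, hexp⟩ := hexp_near.exists_lt
  refine ⟨ζ₂, hζ₂, hexp, ?_⟩
  rw [← hζ₁, integral_sub_mul_sub hμ, integral_sub_mul_sub hμ]
  gcongr

/-- For a positive atomless finite measure `μ` supported in `[t,T]` with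
`μ((t,T)) > 0`, there exists `ζ₁` with `∫ (T−s)(ζ₁−s)dμ(s) = 0`, and some `ζ₂ < ζ₁`
with simultaneously `∫ (e^{(T−s)(ζ₂−s)} − 1)dμ(s) > 0` and `∫ (T−s)(ζ₂−s)dμ(s) < 0`. -/
theorem stmt_15 (t T : ℝ) (hT : t < T) (μ : Measure ℝ) [IsFiniteMeasure μ] [NullSingletonClass μ]
    (hsupp : μ (Set.Icc t T)ᶜ = 0) (hpos : 0 < μ (Set.Ioo t T)) :
    ∃ ζ₁ : ℝ, (∫ s, (T - s) * (ζ₁ - s) ∂μ) = 0 ∧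
      ∃ ζ₂ : ℝ, ζ₂ < ζ₁ ∧
        (0 < ∫ s, (Real.exp ((T - s) * (ζ₂ - s)) - 1) ∂μ) ∧
        (∫ s, (T - s) * (ζ₂ - s) ∂μ) < 0 :=
  stmt_15_general t T μ hsupp hpos
end

section
/- Let Δ : [t,T) → (0,∞) be measurable with ∫_t^T Δ(s)ds < ∞ and ∫_t^T Δ(s)²ds = ∞, and let ‖σv(s)‖² be bounded above and below away from 0. For τ ∈ (t,T) define m(τ) := ∫_t^τ (Δ(s) − Δ(s)²/2)‖σv(s)‖² ds. Then lim_{τ↑T} m(τ) = −∞, and consequently for any x > ξ, lim_{τ↑T} [ξ + (x−ξ)e^{m(τ)}] = ξ. -/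
open MeasureTheory intervalIntegral

/-- Under the naive strategy, with leverage `Δ` integrable but not square-integrable near
`T`, and `f(s) = ‖σv(s)‖²` bounded above and below away from `0`, the log-median
`m(τ) = ∫_t^τ (Δ(s) − Δ(s)²/2) f(s) ds` tends to `−∞` as `τ ↑ T`, and hence for `x > ξ`
the conditional median `ξ + (x−ξ)e^{m(τ)}` tends to `ξ`. -/
theorem stmt_18 (t T ξ : ℝ) (hT : t < T)
    (Δ : ℝ → ℝ) (hΔmeas : Measurable Δ) (hΔpos : ∀ s ∈ Set.Ico t T, 0 < Δ s)
    (hΔint : IntervalIntegrable Δ volume t T)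
    (hΔsqloc : ∀ τ ∈ Set.Ico t T, IntervalIntegrable (fun s => (Δ s) ^ 2) volume t τ)
    (hΔsqdiv : Filter.Tendsto (fun τ => ∫ s in t..τ, (Δ s) ^ 2)
      (nhdsWithin T (Set.Iio T)) Filter.atTop)
    (f : ℝ → ℝ) (hfmeas : Measurable f)
    (c C : ℝ) (hc : 0 < c) (hf : ∀ s ∈ Set.Ico t T, c ≤ f s ∧ f s ≤ C) :
    let mfun := fun τ : ℝ => ∫ s in t..τ, (Δ s - (Δ s) ^ 2 / 2) * f s;
    Filter.Tendsto mfun (nhdsWithin T (Set.Iio T)) Filter.atBot ∧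
    ∀ x : ℝ, ξ < x →
      Filter.Tendsto (fun τ => ξ + (x - ξ) * Real.exp (mfun τ))
        (nhdsWithin T (Set.Iio T)) (nhds ξ) := by
  intro mfun
  have hCpos : 0 < C := lt_of_lt_of_le hc (le_trans (hf t ⟨le_rfl, hT⟩).1 (hf t ⟨le_rfl, hT⟩).2)
  set K : ℝ := C * ∫ s in t..T, Δ s with hKdef
  -- nonnegativity of Δ a.e. on Ioc t T
  have hne : ∀ᵐ s : ℝ ∂volume, s ≠ T := by
    rw [MeasureTheory.ae_iff]
    simp [Real.volume_singleton]
  have hΔnonneg : 0 ≤ᵐ[volume.restrict (Set.Ioc t T)] Δ := by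
    filter_upwards [ae_restrict_mem measurableSet_Ioc, ae_restrict_of_ae hne] with s hs hsne
    exact (hΔpos s ⟨hs.1.le, lt_of_le_of_ne hs.2 hsne⟩).le
  have key : ∀ τ ∈ Set.Ioo t T, mfun τ ≤ K - c / 2 * ∫ s in t..τ, (Δ s) ^ 2 := by
    intro τ hτ
    have htτ : t ≤ τ := hτ.1.le
    have hτT : τ < T := hτ.2
    have hτIco : τ ∈ Set.Ico t T := ⟨htτ, hτT⟩
    have hsub : Set.uIcc t τ ⊆ Set.uIcc t T :=
      Set.uIcc_subset_uIcc Set.left_mem_uIcc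
        (by rw [Set.uIcc_of_le hT.le]; exact ⟨htτ, hτT.le⟩)
    have hΔtτ : IntervalIntegrable Δ volume t τ := hΔint.mono_set hsub
    have hmeas : Measurable fun s => (Δ s - (Δ s) ^ 2 / 2) * f s :=
      (hΔmeas.sub ((hΔmeas.pow_const 2).div_const 2)).mul hfmeas
    have hg : IntervalIntegrable (fun s => C * |Δ s| + C * (Δ s) ^ 2) volume t τ :=
      (hΔtτ.abs.const_mul C).add ((hΔsqloc τ hτIco).const_mul C)
    have hbound : ∀ s ∈ Set.Ioc t τ,
        |(Δ s - (Δ s) ^ 2 / 2) * f s| ≤ C * |Δ s| + C * (Δ s) ^ 2 := by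
      intro s hs
      have hsIco : s ∈ Set.Ico t T := ⟨hs.1.le, lt_of_le_of_lt hs.2 hτT⟩
      rcases hf s hsIco with ⟨hfc, hfC⟩
      have hΔs := hΔpos s hsIco
      have h1 : |Δ s - (Δ s) ^ 2 / 2| ≤ Δ s + (Δ s) ^ 2 := by
        rw [abs_sub_le_iff]
        constructor <;> nlinarith [sq_nonneg (Δ s)]
      rw [abs_mul, abs_of_pos (hc.trans_le hfc)]
      calc |Δ s - (Δ s) ^ 2 / 2| * f s ≤ (Δ s + (Δ s) ^ 2) * C :=
            mul_le_mul h1 hfC (le_of_lt (hc.trans_le hfc)) (by positivity)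
        _ = C * |Δ s| + C * (Δ s) ^ 2 := by rw [abs_of_pos hΔs]; ring
    have hInt : IntervalIntegrable (fun s => (Δ s - (Δ s) ^ 2 / 2) * f s) volume t τ := by
      apply hg.mono_fun hmeas.aestronglyMeasurable
      rw [Set.uIoc_of_le htτ]
      filter_upwards [ae_restrict_mem measurableSet_Ioc] with s hs
      simp only [Real.norm_eq_abs]
      exact (hbound s hs).trans (le_abs_self _)
    have hg2 : IntervalIntegrable (fun s => C * Δ s - c / 2 * (Δ s) ^ 2) volume t τ :=
      (hΔtτ.const_mul C).sub ((hΔsqloc τ hτIco).const_mul (c / 2))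
    have hmono : mfun τ ≤ ∫ s in t..τ, (C * Δ s - c / 2 * (Δ s) ^ 2) := by
      apply intervalIntegral.integral_mono_on htτ hInt hg2
      intro s hs
      have hsIco : s ∈ Set.Ico t T := ⟨hs.1, lt_of_le_of_lt hs.2 hτT⟩
      rcases hf s hsIco with ⟨hfc, hfC⟩
      have hΔs := hΔpos s hsIco
      nlinarith [sq_nonneg (Δ s)]
    have hsplit : ∫ s in t..τ, (C * Δ s - c / 2 * (Δ s) ^ 2)
        = C * (∫ s in t..τ, Δ s) - c / 2 * ∫ s in t..τ, (Δ s) ^ 2 := by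
      rw [intervalIntegral.integral_sub (hΔtτ.const_mul C)
        ((hΔsqloc τ hτIco).const_mul (c / 2)),
        intervalIntegral.integral_const_mul, intervalIntegral.integral_const_mul]
    have hΔle : (∫ s in t..τ, Δ s) ≤ ∫ s in t..T, Δ s :=
      intervalIntegral.integral_mono_interval le_rfl htτ hτT.le hΔnonneg hΔint
    have : C * (∫ s in t..τ, Δ s) ≤ K := by
      rw [hKdef]; exact mul_le_mul_of_nonneg_left hΔle hCpos.le
    calc mfun τ ≤ _ := hmono
      _ = C * (∫ s in t..τ, Δ s) - c / 2 * ∫ s in t..τ, (Δ s) ^ 2 := hsplit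
      _ ≤ K - c / 2 * ∫ s in t..τ, (Δ s) ^ 2 := by linarith
  have hIoo : Set.Ioo t T ∈ nhdsWithin T (Set.Iio T) := by
    rw [← Set.Ioi_inter_Iio]
    exact Filter.inter_mem (mem_nhdsWithin_of_mem_nhds (Ioi_mem_nhds hT)) self_mem_nhdsWithin
  have hbnd : Filter.Tendsto (fun τ => K - c / 2 * ∫ s in t..τ, (Δ s) ^ 2)
      (nhdsWithin T (Set.Iio T)) Filter.atBot := by
    simp only [sub_eq_add_neg]
    apply Filter.tendsto_atBot_add_const_left _ K
    exact Filter.tendsto_neg_atTop_atBot.comp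
      (hΔsqdiv.const_mul_atTop (by positivity : (0:ℝ) < c / 2))
  have hmb : Filter.Tendsto mfun (nhdsWithin T (Set.Iio T)) Filter.atBot := by
    apply Filter.tendsto_atBot_mono' _ _ hbnd
    filter_upwards [hIoo] with τ hτ
    exact key τ hτ
  refine ⟨hmb, fun x hx => ?_⟩
  have h0 : Filter.Tendsto (fun τ => Real.exp (mfun τ)) (nhdsWithin T (Set.Iio T)) (nhds 0) :=
    Real.tendsto_exp_atBot.comp hmb
  have := Filter.Tendsto.add (tendsto_const_nhds (x := ξ))
    (Filter.Tendsto.mul (tendsto_const_nhds (x := x - ξ)) h0)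
  simpa using this
end
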